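/- arXiv:1303.6557 — 2 statements merged into one kernel-verified Lean document; each statement's English description precedes it below -/
import Mathlib

section
/- Let H and K be Hilbert spaces and T : Dom(T) ⊆ H → K a densely defined closed linear operator whose range is closed in K. Let Π₁ : H → H and Π₂ : K → K be the orthogonal projections onto ker(T) and ker(T*) respectively. Then there exists a unique bounded linear operator S : K → H such that T∘S + Π₂ = I on K, S∘Π₂ = 0, and Π₁∘S = 0. -/
/-! Since the range of `T` is closed, it equals `(ker T†)ᗮ`, so `v - Π₂ v` lies in it for every
`v`. Two preimages of a point differ by an element of `ker T`, on which `Π₁` is the identity, so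
each point of the range has exactly one preimage killed by `Π₁`; `S v` is that preimage of
`v - Π₂ v`. The graph of `S` is cut out of `K × H` by the closed graph of `T` and the kernel of
`Π₁`, hence is closed, and `S` is bounded by the closed graph theorem. -/

open scoped LinearPMap

/-- `P` is the orthogonal projection of the Hilbert space `E` onto the set `S`:
every value lies in `S` and `x - P x` is orthogonal to `S`. -/
def IsOrthogonalProjectionOnto {E : Type*} [NormedAddCommGroup E] [InnerProductSpace ℂ E]
    (S : Set E) (P : E →L[ℂ] E) : Prop :=
  (∀ x, P x ∈ S) ∧ ∀ x, ∀ y ∈ S, (inner ℂ (x - P x) y : ℂ) = 0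

/-- The kernel of a partially defined operator, as a subset of the ambient space. -/
def pmapKer {E F : Type*} [NormedAddCommGroup E] [InnerProductSpace ℂ E]
    [NormedAddCommGroup F] [InnerProductSpace ℂ F] (T : E →ₗ.[ℂ] F) : Set E :=
  {x : E | ∃ hx : x ∈ T.domain, T ⟨x, hx⟩ = 0}

lemma LinearPMap.mem_graph_iff_exists_apply_eq {R E F : Type*} [Ring R] [AddCommGroup E]
    [Module R E] [AddCommGroup F] [Module R F] (T : E →ₗ.[R] F) {x : E} {y : F} :
    (x, y) ∈ T.graph ↔ ∃ hx : x ∈ T.domain, T ⟨x, hx⟩ = y := by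
  simp [LinearPMap.mem_graph_iff]

lemma Submodule.exists_continuousLinearMap_mem_iff_eq_apply {𝕜 E F : Type*}
    [NontriviallyNormedField 𝕜] [NormedAddCommGroup E] [NormedSpace 𝕜 E] [CompleteSpace E]
    [NormedAddCommGroup F] [NormedSpace 𝕜 F] [CompleteSpace F] {G : Submodule 𝕜 (E × F)}
    (hG : IsClosed (G : Set (E × F))) (h : ∀ x, ∃! y, (x, y) ∈ G) :
    ∃ S : E →L[𝕜] F, ∀ x y, (x, y) ∈ G ↔ y = S x := by
  have hbij : Function.Bijective (Prod.fst ∘ G.subtype) := by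
    refine ⟨fun ⟨⟨x, y⟩, hxy⟩ ⟨⟨x', y'⟩, hxy'⟩ hx => ?_, fun x => ?_⟩
    · obtain rfl : x = x' := hx
      obtain rfl : y = y' := (h x).unique hxy hxy'
      rfl
    · obtain ⟨y, hy, -⟩ := h x
      exact ⟨⟨(x, y), hy⟩, rfl⟩
  obtain ⟨f, rfl⟩ := G.exists_eq_graph hbij
  exact ⟨.ofIsClosedGraph hG, fun x y => f.mem_graph_iff (x, y)⟩

section Projection

variable {E : Type*} [NormedAddCommGroup E] [InnerProductSpace ℂ E] {U : Submodule ℂ E}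
  {P : E →L[ℂ] E}

lemma IsOrthogonalProjectionOnto.sub_apply_mem_orthogonal
    (hP : IsOrthogonalProjectionOnto (U : Set E) P) (x : E) : x - P x ∈ Uᗮ :=
  (U.mem_orthogonal' _).2 (hP.2 x)

lemma IsOrthogonalProjectionOnto.apply_eq_self
    (hP : IsOrthogonalProjectionOnto (U : Set E) P) {x : E} (hx : x ∈ U) : P x = x := by
  have h : x - P x ∈ U ⊓ Uᗮ := ⟨U.sub_mem hx (hP.1 x), hP.sub_apply_mem_orthogonal x⟩
  rw [U.inf_orthogonal_eq_bot, Submodule.mem_bot, sub_eq_zero] at h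
  exact h.symm

end Projection

section PartialInverse

variable {H K : Type*} [NormedAddCommGroup H] [InnerProductSpace ℂ H]
  [NormedAddCommGroup K] [InnerProductSpace ℂ K] {T : H →ₗ.[ℂ] K}

lemma pmapKer_eq_comap_inl_graph (T : H →ₗ.[ℂ] K) :
    pmapKer T = T.graph.comap (LinearMap.inl ℂ H K) := by
  ext x
  simp [pmapKer, T.mem_graph_iff_exists_apply_eq]

lemma comap_inl_graph_adjoint_eq_orthogonal_range [CompleteSpace H]
    (hT : Dense (T.domain : Set H)) :
    T†.graph.comap (LinearMap.inl ℂ K H) = (LinearMap.range T.toFun)ᗮ := by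
  ext y
  simp only [Submodule.mem_comap, LinearMap.inl_apply, T.adjoint_graph_eq_graph_adjoint hT,
    Submodule.mem_adjoint_iff, inner_zero_right, sub_zero, Submodule.mem_orthogonal,
    LinearMap.mem_range, forall_exists_index, forall_apply_eq_imp_iff,
    T.mem_graph_iff_exists_apply_eq, Subtype.forall, LinearPMap.toFun_eq_coe]
  exact ⟨fun h _ a ha hu => hu ▸ h a ha, fun h a ha => h _ a ha rfl⟩

lemma range_eq_orthogonal_comap_inl_graph_adjoint [CompleteSpace H] [CompleteSpace K]
    (hT : Dense (T.domain : Set H)) (hran : IsClosed (Set.range fun x : T.domain => T x)) :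
    LinearMap.range T.toFun = (T†.graph.comap (LinearMap.inl ℂ K H))ᗮ := by
  rw [comap_inl_graph_adjoint_eq_orthogonal_range hT, Submodule.orthogonal_orthogonal_eq_closure,
    IsClosed.submodule_topologicalClosure_eq hran]

lemma eq_of_mem_graph_of_apply_eq_zero {P : H →L[ℂ] H}
    (hP : IsOrthogonalProjectionOnto (pmapKer T) P) {x x' : H} {y : K}
    (hx : (x, y) ∈ T.graph) (hPx : P x = 0) (hx' : (x', y) ∈ T.graph) (hPx' : P x' = 0) :
    x = x' := by
  rw [pmapKer_eq_comap_inl_graph] at hP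
  have hker : x - x' ∈ T.graph.comap (LinearMap.inl ℂ H K) := by
    simpa using T.graph.sub_mem hx hx'
  rw [← sub_eq_zero, ← hP.apply_eq_self hker, map_sub, hPx, hPx', sub_zero]

lemma existsUnique_mem_graph_apply_eq_zero {P : H →L[ℂ] H}
    (hP : IsOrthogonalProjectionOnto (pmapKer T) P) {y : K} (hy : y ∈ LinearMap.range T.toFun) :
    ∃! x, (x, y) ∈ T.graph ∧ P x = 0 := by
  refine existsUnique_of_exists_of_unique ?_ fun x x' hx hx' =>
    eq_of_mem_graph_of_apply_eq_zero hP hx.1 hx.2 hx'.1 hx'.2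
  rw [pmapKer_eq_comap_inl_graph] at hP
  obtain ⟨u, rfl⟩ := hy
  have hPu : (P u, 0) ∈ T.graph := hP.1 u
  refine ⟨u - P u, by simpa using T.graph.sub_mem (T.mem_graph u) hPu, ?_⟩
  rw [map_sub, hP.apply_eq_self (hP.1 u), sub_self]

def partialInverseGraph (T : H →ₗ.[ℂ] K) (P₁ : H →L[ℂ] H) (P₂ : K →L[ℂ] K) :
    Submodule ℂ (K × H) :=
  T.graph.comap ((LinearMap.snd ℂ K H).prod
      (LinearMap.fst ℂ K H - P₂.toLinearMap ∘ₗ LinearMap.fst ℂ K H)) ⊓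
    LinearMap.ker (P₁.toLinearMap ∘ₗ LinearMap.snd ℂ K H)

lemma mem_partialInverseGraph {P₁ : H →L[ℂ] H} {P₂ : K →L[ℂ] K} {v : K} {x : H} :
    (v, x) ∈ partialInverseGraph T P₁ P₂ ↔ (x, v - P₂ v) ∈ T.graph ∧ P₁ x = 0 :=
  Iff.rfl

lemma isClosed_partialInverseGraph (hT : T.IsClosed) (P₁ : H →L[ℂ] H) (P₂ : K →L[ℂ] K) :
    IsClosed (partialInverseGraph T P₁ P₂ : Set (K × H)) := by
  change IsClosed ({p : K × H | (p.2, p.1 - P₂ p.1) ∈ T.graph} ∩ {p | P₁ p.2 = 0})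
  exact (hT.preimage (by fun_prop)).inter (isClosed_eq (by fun_prop) continuous_const)

lemma existsUnique_mem_partialInverseGraph [CompleteSpace H] [CompleteSpace K]
    (hT : Dense (T.domain : Set H)) (hran : IsClosed (Set.range fun x : T.domain => T x))
    {P₁ : H →L[ℂ] H} {P₂ : K →L[ℂ] K}
    (hP₁ : IsOrthogonalProjectionOnto (pmapKer T) P₁)
    (hP₂ : IsOrthogonalProjectionOnto (pmapKer T†) P₂) (v : K) :
    ∃! x, (v, x) ∈ partialInverseGraph T P₁ P₂ := by
  rw [pmapKer_eq_comap_inl_graph] at hP₂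
  have hv : v - P₂ v ∈ LinearMap.range T.toFun := by
    rw [range_eq_orthogonal_comap_inl_graph_adjoint hT hran]
    exact hP₂.sub_apply_mem_orthogonal v
  exact existsUnique_mem_graph_apply_eq_zero hP₁ hv

end PartialInverse

/-- Existence and uniqueness of the partial inverse of a densely defined closed
operator with closed range. -/
theorem exists_unique_partial_inverse
    {H K : Type*} [NormedAddCommGroup H] [InnerProductSpace ℂ H] [CompleteSpace H]
    [NormedAddCommGroup K] [InnerProductSpace ℂ K] [CompleteSpace K]
    (T : H →ₗ.[ℂ] K) (hdense : Dense (T.domain : Set H)) (hclosed : T.IsClosed)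
    (hran : IsClosed (Set.range fun x : T.domain => T x))
    (P₁ : H →L[ℂ] H) (P₂ : K →L[ℂ] K)
    (hP₁ : IsOrthogonalProjectionOnto (pmapKer T) P₁)
    (hP₂ : IsOrthogonalProjectionOnto (pmapKer T.adjoint) P₂) :
    ∃! S : K →L[ℂ] H,
      (∀ v : K, ∃ hv : S v ∈ T.domain, T ⟨S v, hv⟩ + P₂ v = v) ∧
      (∀ v : K, S (P₂ v) = 0) ∧
      (∀ v : K, P₁ (S v) = 0) := by
  obtain ⟨S, hS⟩ := Submodule.exists_continuousLinearMap_mem_iff_eq_apply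
    (isClosed_partialInverseGraph hclosed P₁ P₂)
    (existsUnique_mem_partialInverseGraph hdense hran hP₁ hP₂)
  have hSv (v : K) : (S v, v - P₂ v) ∈ T.graph ∧ P₁ (S v) = 0 :=
    mem_partialInverseGraph.1 ((hS v (S v)).2 rfl)
  refine ⟨S, ⟨fun v => ?_, fun v => ?_, fun v => (hSv v).2⟩,
    fun S' ⟨hTS', _, hPS'⟩ => ?_⟩
  · obtain ⟨hv, hTv⟩ := T.mem_graph_iff_exists_apply_eq.1 (hSv v).1
    exact ⟨hv, by rw [hTv, sub_add_cancel]⟩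
  · rw [pmapKer_eq_comap_inl_graph] at hP₂
    refine ((hS (P₂ v) 0).1 (mem_partialInverseGraph.2 ⟨?_, map_zero P₁⟩)).symm
    simp [hP₂.apply_eq_self (hP₂.1 v)]
  · ext v
    obtain ⟨hv, hTv⟩ := hTS' v
    exact (hS v (S' v)).1 <| mem_partialInverseGraph.2
      ⟨T.mem_graph_iff_exists_apply_eq.2 ⟨hv, eq_sub_of_add_eq hTv⟩, hPS' v⟩
end

section
/- Consider the polynomial ring ℂ[x, y, t] (where x plays the role of z, y of z̄, t of the real variable) and the ℂ-linear derivation L := ∂/∂y + i·x·∂/∂t on it. Then for every monomial y^α x^β t^γ (α, β, γ ∈ ℕ), there exists a polynomial f ∈ ℂ[x, y, t], which is a finite ℂ-linear combination of monomials y^a x^b t^c satisfying a + b + 2c = α + β + 2γ + 1, such that L(f) = y^α x^β t^γ. -/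
/-!
Since `L (y^(a+1) x^b t^c) = (a+1) y^a x^b t^c + i c y^(a+1) x^(b+1) t^(c-1)`, the monomial
`y^(α+1) x^β t^γ / (α+1)` is a preimage of `y^α x^β t^γ` up to an error term with a smaller power of `t`
and the same quasi-degree, so induction on `γ` corrects it away.
-/

open MvPolynomial

/-- The model CR vector field `L = ∂/∂y + i·x·∂/∂t` on `ℂ[x, y, t]`,
with variables `0 ↦ x`, `1 ↦ y`, `2 ↦ t`. -/
noncomputable def Lder (p : MvPolynomial (Fin 3) ℂ) : MvPolynomial (Fin 3) ℂ :=
  pderiv 1 p + C Complex.I * (X 0 * pderiv 2 p)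

/-- Quasi-homogeneity is `IsWeightedHomogeneous quasiWeight`. -/
def quasiWeight : Fin 3 → ℕ := ![1, 1, 2]

lemma weight_quasiWeight (m : Fin 3 →₀ ℕ) :
    Finsupp.weight quasiWeight m = m 1 + m 0 + 2 * m 2 := by
  simp only [quasiWeight, Finsupp.weight_apply, smul_eq_mul, zero_mul, implies_true,
    Finsupp.sum_fintype, Fin.sum_univ_three, Matrix.cons_val_zero, mul_one, Matrix.cons_val_one,
    Matrix.cons_val]
  ring

lemma isWeightedHomogeneous_quasiWeight_X_pow_mul {a b c n : ℕ} (h : a + b + 2 * c = n) :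
    IsWeightedHomogeneous quasiWeight (X 1 ^ a * X 0 ^ b * X 2 ^ c : MvPolynomial (Fin 3) ℂ) n := by
  have hw := (((isWeightedHomogeneous_X ℂ quasiWeight 1).pow a).mul
    ((isWeightedHomogeneous_X ℂ quasiWeight 0).pow b)).mul
    ((isWeightedHomogeneous_X ℂ quasiWeight 2).pow c)
  simpa [quasiWeight, mul_comm, ← h] using hw

lemma Lder_sub (p q : MvPolynomial (Fin 3) ℂ) : Lder (p - q) = Lder p - Lder q := by
  simp only [Lder, map_sub]
  ring

lemma Lder_C_mul (r : ℂ) (p : MvPolynomial (Fin 3) ℂ) : Lder (C r * p) = C r * Lder p := by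
  simp only [Lder, Derivation.leibniz, pderiv_C, smul_eq_mul]
  ring

lemma Lder_X_pow_mul (a b c : ℕ) :
    Lder (X 1 ^ (a + 1) * X 0 ^ b * X 2 ^ c) =
      C ((a : ℂ) + 1) * (X 1 ^ a * X 0 ^ b * X 2 ^ c)
        + C (Complex.I * c) * (X 1 ^ (a + 1) * X 0 ^ (b + 1) * X 2 ^ (c - 1)) := by
  simp only [Lder, Derivation.leibniz, Derivation.leibniz_pow, pderiv_X, ne_eq, Fin.reduceEq,
    not_false_eq_true, Pi.single_eq_of_ne, smul_eq_mul, mul_zero, zero_ne_one,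
    add_tsub_cancel_right, Pi.single_eq_same, mul_one, nsmul_eq_mul, Nat.cast_add, Nat.cast_one,
    zero_add, add_zero, C_add, map_natCast, C_1, C_mul]
  ring

lemma exists_isWeightedHomogeneous_Lder_eq (α β γ : ℕ) :
    ∃ f : MvPolynomial (Fin 3) ℂ, IsWeightedHomogeneous quasiWeight f (α + β + 2 * γ + 1) ∧
      Lder f = X 1 ^ α * X 0 ^ β * X 2 ^ γ := by
  induction γ generalizing α β with
  | zero =>
    have hα : (α : ℂ) + 1 ≠ 0 := by exact_mod_cast α.succ_ne_zero
    refine ⟨C ((α : ℂ) + 1)⁻¹ * (X 1 ^ (α + 1) * X 0 ^ β * X 2 ^ 0), ?_, ?_⟩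
    · exact (isWeightedHomogeneous_quasiWeight_X_pow_mul (by ring)).C_mul _
    · rw [Lder_C_mul, Lder_X_pow_mul, Nat.cast_zero, mul_zero, C_0, zero_mul, add_zero,
        ← mul_assoc, ← C_mul, inv_mul_cancel₀ hα, C_1, one_mul]
  | succ γ ih =>
    have hα : (α : ℂ) + 1 ≠ 0 := by exact_mod_cast α.succ_ne_zero
    obtain ⟨g, hg, hLg⟩ := ih (α + 1) (β + 1)
    refine ⟨C ((α : ℂ) + 1)⁻¹ * (X 1 ^ (α + 1) * X 0 ^ β * X 2 ^ (γ + 1)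
      - C (Complex.I * (γ + 1 : ℕ)) * g), ?_, ?_⟩
    · rw [show α + 1 + (β + 1) + 2 * γ + 1 = α + β + 2 * (γ + 1) + 1 by ring] at hg
      exact ((isWeightedHomogeneous_quasiWeight_X_pow_mul (by ring)).sub (hg.C_mul _)).C_mul _
    · rw [Lder_C_mul, Lder_sub, Lder_C_mul, hLg, Lder_X_pow_mul, Nat.add_sub_cancel,
        add_sub_cancel_right, ← mul_assoc, ← C_mul, inv_mul_cancel₀ hα, C_1, one_mul]

/-- Every monomial `y^α x^β t^γ` is in the image of `L`, with a quasi-homogeneous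
preimage of quasi-degree `α + β + 2γ + 1`. -/
theorem exists_quasihomogeneous_preimage (α β γ : ℕ) :
    ∃ f : MvPolynomial (Fin 3) ℂ,
      (∀ m ∈ f.support, m 1 + m 0 + 2 * m 2 = α + β + 2 * γ + 1) ∧
      Lder f = X 1 ^ α * X 0 ^ β * X 2 ^ γ := by
  obtain ⟨f, hf, hLf⟩ := exists_isWeightedHomogeneous_Lder_eq α β γ
  exact ⟨f, fun m hm => weight_quasiWeight m ▸ hf (mem_support_iff.mp hm), hLf⟩
end
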